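/- arXiv:2603.06260 — 5 statements merged into one kernel-verified Lean document; each statement's English description precedes it below -/
import Mathlib

section
/- Case 1 dual construction (sub-trajectory of non-saturated nodes followed by a fully served node): let a ≤ b with b + 1 ≤ l − 1, and let μ ∈ ℝ satisfy p_k ≤ μ for all k ∈ {a,…,b} and 0 ≤ μ ≤ p_{b+1}. Then there exist nonnegative reals λ¹_k, λ²_k, λ³_k, λ⁴_k, λ⁵_k for k ∈ {a,…,b+1} satisfying the stationarity equations with boundary value λ⁵_{a−1} := μ, and such that λ¹_k = λ²_k = λ⁴_k = 0 for all k ∈ {a,…,b}, λ¹_{b+1} = λ²_{b+1} = λ³_{b+1} = 0, and λ⁵_{b+1} = μ. -/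
/-- Case 1 dual construction: a sub-trajectory of non-saturated nodes `{a,…,b}`
followed by a fully served node `b+1`. -/
theorem case1_dual_construction
    (l : ℕ) (hl : 1 ≤ l) (p : ℕ → ℝ) (hp : ∀ i < l, 0 ≤ p i)
    (a b : ℕ) (hab : a ≤ b) (hbl : b + 2 ≤ l)
    (μ : ℝ) (hμp : ∀ k, a ≤ k → k ≤ b → p k ≤ μ) (hμ0 : 0 ≤ μ) (hμ1 : μ ≤ p (b + 1)) :
    ∃ lam1 lam2 lam3 lam4 lam5 : ℕ → ℝ,
      (∀ k, a ≤ k → k ≤ b + 1 →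
        0 ≤ lam1 k ∧ 0 ≤ lam2 k ∧ 0 ≤ lam3 k ∧ 0 ≤ lam4 k ∧ 0 ≤ lam5 k) ∧
      (∀ k, a ≤ k → k ≤ b + 1 →
        (-lam1 k + lam2 k + lam5 k - (if k = a then μ else lam5 (k - 1)) = 0) ∧
        (-lam3 k + lam4 k + lam5 k = p k)) ∧
      (∀ k, a ≤ k → k ≤ b → lam1 k = 0 ∧ lam2 k = 0 ∧ lam4 k = 0) ∧
      lam1 (b + 1) = 0 ∧ lam2 (b + 1) = 0 ∧ lam3 (b + 1) = 0 ∧ lam5 (b + 1) = μ := by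
  refine ⟨fun _ => 0, fun _ => 0, fun k => if k ≤ b then μ - p k else 0,
    fun k => if k ≤ b then 0 else p k - μ, fun _ => μ, ?_, ?_, ?_, rfl, rfl, ?_, rfl⟩
  · intro k hak hk
    refine ⟨le_refl 0, le_refl 0, ?_, ?_, hμ0⟩
    · by_cases h : k ≤ b <;> simp [h]
      exact hμp k hak h
    · by_cases h : k ≤ b <;> simp [h]
      have : k = b + 1 := le_antisymm hk (Nat.succ_le_of_lt (Nat.lt_of_not_le h))
      subst this; linarith
  · intro k hak hk
    constructor
    · by_cases h : k = a <;> simp [h]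
    · by_cases h : k ≤ b
      · simp [h]
      · have : k = b + 1 := le_antisymm hk (Nat.succ_le_of_lt (Nat.lt_of_not_le h))
        subst this; simp
  · intro k hak hk; simp [hk]
  · simp
end

section
/- Case 2 dual construction (two consecutive sub-trajectories of non-saturated nodes): let a ≤ b ≤ l − 1, and let μ ∈ ℝ satisfy μ ≥ 0 and p_k ≤ μ for all k ∈ {a,…,b}. Then there exist nonnegative reals λ¹_k, λ²_k, λ³_k, λ⁴_k, λ⁵_k for k ∈ {a,…,b} satisfying the stationarity equations with boundary value λ⁵_{a−1} := μ, and such that λ¹_k = λ²_k = λ⁴_k = 0 and λ⁵_k = μ for all k ∈ {a,…,b}. -/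
/-- Case 2 dual construction: two consecutive sub-trajectories of non-saturated nodes,
covering the indices `{a,…,b}`. -/
theorem case2_dual_construction
    (l : ℕ) (hl : 1 ≤ l) (p : ℕ → ℝ) (hp : ∀ i < l, 0 ≤ p i)
    (a b : ℕ) (hab : a ≤ b) (hbl : b + 1 ≤ l)
    (μ : ℝ) (hμ0 : 0 ≤ μ) (hμp : ∀ k, a ≤ k → k ≤ b → p k ≤ μ) :
    ∃ lam1 lam2 lam3 lam4 lam5 : ℕ → ℝ,
      (∀ k, a ≤ k → k ≤ b →
        0 ≤ lam1 k ∧ 0 ≤ lam2 k ∧ 0 ≤ lam3 k ∧ 0 ≤ lam4 k ∧ 0 ≤ lam5 k) ∧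
      (∀ k, a ≤ k → k ≤ b →
        (-lam1 k + lam2 k + lam5 k - (if k = a then μ else lam5 (k - 1)) = 0) ∧
        (-lam3 k + lam4 k + lam5 k = p k)) ∧
      (∀ k, a ≤ k → k ≤ b → lam1 k = 0 ∧ lam2 k = 0 ∧ lam4 k = 0 ∧ lam5 k = μ) := by
  refine ⟨0, 0, fun k => μ - p k, 0, fun _ => μ, ?_, ?_, ?_⟩
  · intro k hk hk'
    exact ⟨le_refl 0, le_refl 0, by simp only []; linarith [hμp k hk hk'], le_refl 0, hμ0⟩
  · intro k hk hk'
    refine ⟨by split <;> simp, ?_⟩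
    show -(μ - p k) + 0 + μ = p k
    ring
  · intro k _ _; exact ⟨rfl, rfl, rfl, rfl⟩
end

section
/- Case 4 dual construction (a fully served node followed by a sub-trajectory of non-saturated nodes): let a ≤ b ≤ l − 1 with a < b, and let μ ∈ ℝ satisfy 0 ≤ μ ≤ p_a and p_k ≤ μ for all k ∈ {a+1,…,b}. Then there exist nonnegative reals λ¹_k, λ²_k, λ³_k, λ⁴_k, λ⁵_k for k ∈ {a,…,b} satisfying the stationarity equations with boundary value λ⁵_{a−1} := μ, and such that λ¹_k = λ²_k = 0 for all k ∈ {a,…,b}, λ³_a = 0, λ⁴_a = p_a − μ, λ⁴_k = 0 and λ³_k = μ − p_k for all k ∈ {a+1,…,b}, and λ⁵_k = μ for all k ∈ {a,…,b}. -/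
/-- Case 4 dual construction: a fully served node `a` followed by a sub-trajectory of
non-saturated nodes `{a+1,…,b}`. -/
theorem case4_dual_construction
    (l : ℕ) (hl : 1 ≤ l) (p : ℕ → ℝ) (hp : ∀ i < l, 0 ≤ p i)
    (a b : ℕ) (hab : a < b) (hbl : b + 1 ≤ l)
    (μ : ℝ) (hμ0 : 0 ≤ μ) (hμa : μ ≤ p a) (hμp : ∀ k, a + 1 ≤ k → k ≤ b → p k ≤ μ) :
    ∃ lam1 lam2 lam3 lam4 lam5 : ℕ → ℝ,
      (∀ k, a ≤ k → k ≤ b →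
        0 ≤ lam1 k ∧ 0 ≤ lam2 k ∧ 0 ≤ lam3 k ∧ 0 ≤ lam4 k ∧ 0 ≤ lam5 k) ∧
      (∀ k, a ≤ k → k ≤ b →
        (-lam1 k + lam2 k + lam5 k - (if k = a then μ else lam5 (k - 1)) = 0) ∧
        (-lam3 k + lam4 k + lam5 k = p k)) ∧
      (∀ k, a ≤ k → k ≤ b → lam1 k = 0 ∧ lam2 k = 0) ∧
      lam3 a = 0 ∧ lam4 a = p a - μ ∧
      (∀ k, a + 1 ≤ k → k ≤ b → lam4 k = 0 ∧ lam3 k = μ - p k) ∧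
      (∀ k, a ≤ k → k ≤ b → lam5 k = μ) := by
  refine ⟨fun _ => 0, fun _ => 0, fun k => if k = a then 0 else μ - p k,
    fun k => if k = a then p a - μ else 0, fun _ => μ, ?_, ?_, ?_, ?_, ?_, ?_, ?_⟩
  · intro k hak hkb
    refine ⟨le_rfl, le_rfl, ?_, ?_, hμ0⟩
    · by_cases h : k = a <;> simp [h]
      exact hμp k (lt_of_le_of_ne hak (Ne.symm h)) hkb
    · by_cases h : k = a <;> simp [h]
      exact hμa
  · intro k hak hkb
    by_cases h : k = a
    · subst h; constructor <;> simp
    · exact ⟨by simp [h], by simp [h]⟩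
  · intro k _ _; exact ⟨rfl, rfl⟩
  · simp
  · simp
  · intro k hak hkb
    have h : k ≠ a := by omega
    simp [h]
  · intro k _ _; rfl
end

section
/- Propagation formula for a single service-time increase: let d ∈ ℝ^l with d_a = 0 for some a ∈ {0,…,l−1}, let δ ≥ 0, and let d' agree with d except that d'_a = δ. Then ŝ(d')_j = ŝ(d)_j for every j ≤ a, and for every j ∈ {a+1,…,l−1}, ŝ(d')_j = max{ ŝ(d)_j, ŝ(d)_a + δ + Σ_{m=a}^{j−1} (d_m + t_m) } (where the sum uses d_a = 0). -/
/-- The earliest-start schedule: `ŝ(d)_0 := s⁻_0` and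
`ŝ(d)_{i+1} := max { ŝ(d)_i + d_i + t_i, s⁻_{i+1} }`. -/
def sHat (t smin d : ℕ → ℝ) : ℕ → ℝ
  | 0 => smin 0
  | i + 1 => max (sHat t smin d i + d i + t i) (smin (i + 1))

/-- Propagation formula for a single service-time increase at position `a`. -/
theorem sHat_single_increase
    (l : ℕ) (hl : 1 ≤ l) (t smin : ℕ → ℝ)
    (d : ℕ → ℝ) (a : ℕ) (ha : a < l) (hda : d a = 0)
    (δ : ℝ) (hδ : 0 ≤ δ)
    (d' : ℕ → ℝ) (hd' : d' = Function.update d a δ) :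
    (∀ j ≤ a, sHat t smin d' j = sHat t smin d j) ∧
    (∀ j, a < j → j < l →
      sHat t smin d' j =
        max (sHat t smin d j)
          (sHat t smin d a + δ + ∑ m ∈ Finset.Ico a j, (d m + t m))) := by
  subst hd'
  have hne : ∀ i, i ≠ a → Function.update d a δ i = d i := fun i h =>
    Function.update_of_ne h _ _
  have h1 : ∀ j ≤ a, sHat t smin (Function.update d a δ) j = sHat t smin d j := by
    intro j hj
    induction j with
    | zero => rfl
    | succ n ih =>
      have hn : n < a := Nat.lt_of_succ_le hj
      simp only [sHat, ih (Nat.le_of_lt hn), hne n (Nat.ne_of_lt hn)]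
  refine ⟨h1, ?_⟩
  intro j haj hjl
  induction j with
  | zero => omega
  | succ n ih =>
    rcases Nat.lt_or_ge a n with h | h
    · have := ih h (Nat.lt_of_succ_lt hjl)
      simp only [sHat, this, hne n (Nat.ne_of_gt h)]
      rw [Finset.sum_Ico_succ_top (Nat.le_of_lt h)]
      simp only [max_def]
      split_ifs <;> linarith
    · have hna : n = a := Nat.le_antisymm h (Nat.lt_succ_iff.mp haj)
      subst hna
      simp only [sHat, h1 n le_rfl, Function.update_self]
      rw [Finset.sum_Ico_succ_top le_rfl, Finset.Ico_self, Finset.sum_empty, hda]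
      simp only [max_def]
      split_ifs <;> linarith
end

section
/- Maximal feasible service-time increment (correctness of the update formula in line 9 of Algorithm STO): let d ∈ ℝ^l with d_a = 0 for some a ∈ {0,…,l−1}, suppose ŝ(d)_j ≤ s⁺_j for all j ∈ {0,…,l−1} and ŝ(d)_{l−1} + d_{l−1} + t_{l−1} ≤ T, let δ ≥ 0, and let d' agree with d except that d'_a = δ. Then, with the convention s⁺_l := T and ŝ extended by ŝ(d')_l := ŝ(d')_{l−1} + d'_{l−1} + t_{l−1}, the schedule ŝ(d') satisfies ŝ(d')_j ≤ s⁺_j for all j ∈ {0,…,l} if and only if δ ≤ s⁺_j − ŝ(d)_a − Σ_{m=a}^{j−1} (d_m + t_m) for every j ∈ {a+1,…,l}; consequently, the largest δ in [0, d_max,a] preserving these window constraints is min{ d_max,a, min_{j=a+1}^{l} ( s⁺_j − ŝ(d)_a − Σ_{m=a}^{j−1} (d_m + t_m) ) }, provided this quantity is nonnegative. -/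
private lemma max_shuffle (S K s p q x : ℝ) (hx : x = K + p + q) :
    ((S ⊔ K) + p + q) ⊔ s = ((S + p + q) ⊔ s) ⊔ x := by
  subst hx
  simp only [max_def]
  split_ifs <;> linarith

private lemma max_shuffle2 (S K p q x : ℝ) (hx : x = K + p + q) :
    (S ⊔ K) + p + q = (S + p + q) ⊔ x := by
  subst hx
  simp only [max_def]
  split_ifs <;> linarith

private lemma sHat_update_eq (t smin d : ℕ → ℝ) (a : ℕ) (hda : d a = 0)
    (δ : ℝ) (hδ : 0 ≤ δ) :
    ∀ j, sHat t smin (Function.update d a δ) j =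
      if a < j then
        max (sHat t smin d j)
          (sHat t smin d a + δ + ∑ m ∈ Finset.Ico a j, (d m + t m))
      else sHat t smin d j
  | 0 => by simp [sHat]
  | (j+1) => by
    have IH := sHat_update_eq t smin d a hda δ hδ j
    rcases lt_trichotomy j a with h | rfl | h
    · have h1 : ¬ a < j := by omega
      have h2 : ¬ a < j + 1 := by omega
      rw [if_neg h1] at IH
      rw [if_neg h2]
      simp [sHat, IH, Function.update_of_ne (by omega : j ≠ a)]
    · rw [if_neg (lt_irrefl j)] at IH
      rw [if_pos (Nat.lt_succ_self j)]
      have hIco : Finset.Ico j (j + 1) = {j} := by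
        rw [Finset.Ico_add_one_right_eq_Icc, Finset.Icc_self]
      simp only [sHat, IH, Function.update_self, hIco, Finset.sum_singleton, hda, add_zero,
        zero_add]
      simp only [max_def]
      split_ifs <;> linarith
    · have h2 : a < j + 1 := by omega
      rw [if_pos h] at IH
      rw [if_pos h2]
      simp only [sHat, IH, Function.update_of_ne (by omega : j ≠ a)]
      exact max_shuffle _ _ _ _ _ _ (by rw [Finset.sum_Ico_succ_top h.le]; ring)

private lemma ext_update (l : ℕ) (hl : 1 ≤ l) (t smin d : ℕ → ℝ) (a : ℕ)
    (ha : a < l) (hda : d a = 0) (δ : ℝ) (hδ : 0 ≤ δ) :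
    sHat t smin (Function.update d a δ) (l - 1) + (Function.update d a δ) (l - 1) + t (l - 1)
      = max (sHat t smin d (l - 1) + d (l - 1) + t (l - 1))
          (sHat t smin d a + δ + ∑ m ∈ Finset.Ico a l, (d m + t m)) := by
  obtain ⟨k, rfl⟩ : ∃ k, l = k + 1 := ⟨l - 1, by omega⟩
  show sHat t smin (Function.update d a δ) k + (Function.update d a δ) k + t k
    = max (sHat t smin d k + d k + t k)
        (sHat t smin d a + δ + ∑ m ∈ Finset.Ico a (k + 1), (d m + t m))
  rcases eq_or_lt_of_le (by omega : a ≤ k) with rfl | hlt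
  · have hIco : Finset.Ico a (a + 1) = {a} := by
      rw [Finset.Ico_add_one_right_eq_Icc, Finset.Icc_self]
    rw [sHat_update_eq t smin d a hda δ hδ a, if_neg (lt_irrefl a),
      Function.update_self, hIco, Finset.sum_singleton, hda]
    rw [max_eq_right (by linarith)]
    ring
  · rw [sHat_update_eq t smin d a hda δ hδ k, if_pos hlt,
      Function.update_of_ne (by omega : k ≠ a)]
    exact max_shuffle2 _ _ _ _ _ (by rw [Finset.sum_Ico_succ_top hlt.le]; ring)

/-- The extended window constraints `ŝ(e)_j ≤ s⁺_j` for `j ∈ {0,…,l}`, with the conventions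
`s⁺_l := T` and `ŝ(e)_l := ŝ(e)_{l-1} + e_{l-1} + t_{l-1}`. -/
def WindowOK (l : ℕ) (T : ℝ) (t smin smax : ℕ → ℝ) (e : ℕ → ℝ) : Prop :=
  (∀ j < l, sHat t smin e j ≤ smax j) ∧
  sHat t smin e (l - 1) + e (l - 1) + t (l - 1) ≤ T

private lemma win_iff (l : ℕ) (hl : 1 ≤ l) (T : ℝ) (t smin smax : ℕ → ℝ)
    (d : ℕ → ℝ) (a : ℕ) (ha : a < l) (hda : d a = 0)
    (hwin : WindowOK l T t smin smax d) (δ : ℝ) (hδ : 0 ≤ δ) :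
    WindowOK l T t smin smax (Function.update d a δ) ↔
      ∀ j, a + 1 ≤ j → j ≤ l →
        δ ≤ (if j = l then T else smax j) - sHat t smin d a
              - ∑ m ∈ Finset.Ico a j, (d m + t m) := by
  constructor
  · rintro ⟨h1, h2⟩ j hj1 hj2
    by_cases hjl : j = l
    · subst hjl
      rw [if_pos rfl]
      rw [ext_update j hl t smin d a ha hda δ hδ] at h2
      have := le_trans (le_max_right _ _) h2
      linarith
    · have hjl' : j < l := lt_of_le_of_ne hj2 hjl
      have hb := h1 j hjl'
      rw [sHat_update_eq t smin d a hda δ hδ j, if_pos (by omega : a < j)] at hb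
      have := le_trans (le_max_right _ _) hb
      rw [if_neg hjl]
      linarith
  · intro h
    constructor
    · intro j hj
      rw [sHat_update_eq t smin d a hda δ hδ j]
      split_ifs with haj
      · refine max_le (hwin.1 j hj) ?_
        have hle := h j (by omega) (by omega)
        rw [if_neg (by omega : ¬ j = l)] at hle
        linarith
      · exact hwin.1 j hj
    · rw [ext_update l hl t smin d a ha hda δ hδ]
      refine max_le hwin.2 ?_
      have hle := h l (by omega) le_rfl
      rw [if_pos rfl] at hle
      linarith

/-- Maximal feasible service-time increment (correctness of the update formula in line 9 of
Algorithm STO): the window constraints hold for the increased service times iff the increment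
`δ` is below all the slacks, and consequently the largest admissible `δ` in `[0, d_max,a]` is
the min expression used by the algorithm, provided it is nonnegative. -/
theorem maximal_feasible_increment
    (l : ℕ) (hl : 1 ≤ l) (T : ℝ) (t dmax smin smax : ℕ → ℝ)
    (d : ℕ → ℝ) (a : ℕ) (ha : a < l) (hda : d a = 0)
    (hwin : WindowOK l T t smin smax d)
    (δ : ℝ) (hδ : 0 ≤ δ)
    (d' : ℕ → ℝ) (hd' : d' = Function.update d a δ) :
    (WindowOK l T t smin smax d' ↔
      ∀ j, a + 1 ≤ j → j ≤ l →
        δ ≤ (if j = l then T else smax j) - sHat t smin d a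
              - ∑ m ∈ Finset.Ico a j, (d m + t m)) ∧
    (∀ δstar : ℝ,
      δstar = min (dmax a)
          ((Finset.Icc (a + 1) l).inf' (Finset.nonempty_Icc.mpr (by omega))
            fun j => (if j = l then T else smax j) - sHat t smin d a
              - ∑ m ∈ Finset.Ico a j, (d m + t m)) →
      0 ≤ δstar →
      δstar ≤ dmax a ∧
      WindowOK l T t smin smax (Function.update d a δstar) ∧
      ∀ δ' : ℝ, 0 ≤ δ' → δ' ≤ dmax a →
        WindowOK l T t smin smax (Function.update d a δ') → δ' ≤ δstar) := by
  constructor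
  · subst hd'
    exact win_iff l hl T t smin smax d a ha hda hwin δ hδ
  · intro δstar hδstar hpos
    refine ⟨hδstar ▸ min_le_left _ _, ?_, ?_⟩
    · refine (win_iff l hl T t smin smax d a ha hda hwin δstar hpos).mpr ?_
      intro j hj1 hj2
      have h1 := hδstar ▸ min_le_right (dmax a)
          ((Finset.Icc (a + 1) l).inf' (Finset.nonempty_Icc.mpr (by omega))
            fun j => (if j = l then T else smax j) - sHat t smin d a
              - ∑ m ∈ Finset.Ico a j, (d m + t m))
      have h2 := Finset.inf'_le (s := Finset.Icc (a + 1) l)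
          (fun j => (if j = l then T else smax j) - sHat t smin d a
              - ∑ m ∈ Finset.Ico a j, (d m + t m))
          (Finset.mem_Icc.mpr ⟨hj1, hj2⟩)
      exact le_trans h1 h2
    · intro δ' h0 hdmax hw
      have hall := (win_iff l hl T t smin smax d a ha hda hwin δ' h0).mp hw
      rw [hδstar]
      refine le_min hdmax (Finset.le_inf' _ _ fun j hj => ?_)
      rcases Finset.mem_Icc.mp hj with ⟨hj1, hj2⟩
      exact hall j hj1 hj2
end
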